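/- arXiv:1210.2868 — 4 statements merged into one kernel-verified Lean document; each statement's English description precedes it below -/
import Mathlib

section
/- Let p be a prime and q a positive integer with q > p and p ∤ q. Set k := ⌈(q - p)/(p - 1)⌉ and d := q + k - 1. Then the number of integers n with q ≤ n ≤ d and p ∤ n equals ⌊q/p⌋. -/
theorem stmt_4 (p : ℕ) (hp : p.Prime) (q : ℕ) (hq : p < q) (hpq : ¬ p ∣ q)
    (k d : ℕ) (hk : k = (q - p + (p - 1) - 1) / (p - 1)) (hd : d = q + k - 1) :
    ((Finset.Icc q d).filter fun n => ¬ p ∣ n).card = q / p := by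
  have hp2 := hp.two_le
  -- bounds on b * k where b = p - 1
  have hdm := Nat.div_add_mod (q - p + (p - 1) - 1) (p - 1)
  rw [← hk] at hdm
  have he : (q - p + (p - 1) - 1) % (p - 1) < p - 1 := Nat.mod_lt _ (by omega)
  set e := (q - p + (p - 1) - 1) % (p - 1) with hee
  set P := (p - 1) * k with hP
  -- hdm : P + e = q - p + (p-1) - 1
  have hP1 : q - p ≤ P := by omega
  have hP2 : P ≤ q - 2 := by omega
  have hpk : p * k = P + k := by
    rw [hP]
    cases p with
    | zero => omega
    | succ n => simp [Nat.succ_sub_one]; ring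
  -- facts about m = q / p and r = q % p
  have hqm := Nat.div_add_mod q p
  have hr1 : q % p ≠ 0 := by
    intro h; exact hpq (Nat.dvd_of_mod_eq_zero h)
  have hr2 : q % p < p := Nat.mod_lt _ (by omega)
  set m := q / p with hm
  set r := q % p with hr
  set Q := p * m with hQ
  have hm1 : 1 ≤ m := by
    rw [hm]; exact Nat.one_le_div_iff (by omega) |>.mpr (by omega)
  -- m ≤ k
  have hmk : m ≤ k := by
    by_contra h
    push_neg at h
    have h2 : p * (k + 1) ≤ p * m := Nat.mul_le_mul_left p h
    have h3 : p * (k + 1) = p * k + p := by ring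
    omega
  -- d / p = k
  have hdp : d / p = k := by
    apply Nat.div_eq_of_lt_le
    · have : k * p = p * k := Nat.mul_comm _ _
      omega
    · have : (k + 1) * p = p * k + p := by ring
      omega
  -- (q-1) / p = m
  have hq1p : (q - 1) / p = m := by
    apply Nat.div_eq_of_lt_le
    · have : m * p = p * m := Nat.mul_comm _ _
      omega
    · have : (m + 1) * p = p * m + p := by ring
      omega
  -- counting multiples in Ioc a b
  have hqd : q - 1 ≤ d := by omega
  have hsplit : Finset.Ioc 0 d = Finset.Ioc 0 (q - 1) ∪ Finset.Ioc (q - 1) d :=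
    (Finset.Ioc_union_Ioc_eq_Ioc (Nat.zero_le _) hqd).symm
  have hdisj : Disjoint (Finset.Ioc 0 (q - 1)) (Finset.Ioc (q - 1) d) := by
    rw [Finset.disjoint_left]
    intro a ha hb
    simp only [Finset.mem_Ioc] at ha hb
    omega
  have hcard1 : ((Finset.Ioc 0 d).filter (p ∣ ·)).card = d / p :=
    Nat.Ioc_filter_dvd_card_eq_div d p
  have hcard2 : ((Finset.Ioc 0 (q - 1)).filter (p ∣ ·)).card = (q - 1) / p :=
    Nat.Ioc_filter_dvd_card_eq_div (q - 1) p
  have hcard3 : ((Finset.Ioc (q - 1) d).filter (p ∣ ·)).card = d / p - (q - 1) / p := by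
    rw [hsplit, Finset.filter_union,
      Finset.card_union_of_disjoint (Finset.disjoint_filter_filter hdisj)] at hcard1
    omega
  -- Icc q d = Ioc (q-1) d
  have hIcc : Finset.Icc q d = Finset.Ioc (q - 1) d := by
    ext n
    simp only [Finset.mem_Icc, Finset.mem_Ioc]
    omega
  have htotal : (Finset.Icc q d).card = k := by
    rw [Nat.card_Icc]; omega
  have hsum := Finset.card_filter_add_card_filter_not
    (s := Finset.Icc q d) (p := fun n => p ∣ n)
  rw [htotal, hIcc, hcard3, hdp, hq1p] at hsum
  rw [hIcc]
  omega
end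

section
/- Let K be an algebraically closed field of characteristic p > 0 and f ∈ K[[x]] with f(0) = 0 and multiplicity m = m(f). Suppose the p-adic valuation e(m) of m equals e(f) := min {e(n) : n ∈ supp(f)}. Then f is right equivalent to x^m, i.e., there is a formal coordinate change φ(x) = a₁x + a₂x² + ... (a₁ ≠ 0) with f(φ(x)) = x^m. -/
/-!
Write `m = p ^ e * k` with `e = e(m)`, so that `p ∤ k`. Every exponent in the support of `f` is
divisible by `p ^ e`, so, `K` being perfect, `f = F ^ p ^ e` where the coefficients of `F` are
`p ^ e`-th roots of those of `f`. Then `F` has order `k`, and since `k` is invertible in `K`,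
Hensel's lemma in the complete ring `K⟦X⟧` gives a `k`-th root of the unit `F / X ^ k`; thus
`F = φ ^ k` with `φ = a₁ X + a₂ X² + ⋯`, `a₁ ≠ 0`, and `f = φ ^ m`. Substituting the
compositional inverse of `φ` sends `φ` to `X`, hence `f` to `X ^ m`.
-/

namespace PowerSeries

section CommRing

variable {R : Type*} [CommRing R]

noncomputable def substAlgEquiv (φ : R⟦X⟧) (hφ : constantCoeff φ = 0) (hφ₁ : IsUnit (coeff 1 φ)) :
    R⟦X⟧ ≃ₐ[R] R⟦X⟧ :=
  have hφ' : HasSubst φ := .of_constantCoeff_zero' hφ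
  have hψ : HasSubst (substInvOfIsUnit φ hφ₁) := .substInvOfIsUnit φ hφ₁
  AlgEquiv.ofAlgHom (substAlgHom hφ') (substAlgHom hψ)
    (AlgHom.ext fun f => by
      simp only [AlgHom.comp_apply, coe_substAlgHom, AlgHom.id_apply,
        subst_comp_subst_apply hψ hφ', subst_substInvOfIsUnit_left φ hφ hφ₁, X_subst])
    (AlgHom.ext fun f => by
      simp only [AlgHom.comp_apply, coe_substAlgHom, AlgHom.id_apply,
        subst_comp_subst_apply hφ' hψ, subst_substInvOfIsUnit_right φ hφ hφ₁, X_subst])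

theorem substAlgEquiv_apply (φ : R⟦X⟧) (hφ : constantCoeff φ = 0) (hφ₁ : IsUnit (coeff 1 φ))
    (f : R⟦X⟧) : substAlgEquiv φ hφ hφ₁ f = f.subst φ :=
  congrFun (coe_substAlgHom (.of_constantCoeff_zero' hφ)) f

theorem exists_algEquiv_apply_eq_X {φ : R⟦X⟧} (hφ : constantCoeff φ = 0)
    (hφ₁ : IsUnit (coeff 1 φ)) : ∃ Φ : R⟦X⟧ ≃ₐ[R] R⟦X⟧, Φ φ = X :=
  ⟨(substAlgEquiv φ hφ hφ₁).symm, by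
    rw [AlgEquiv.symm_apply_eq, substAlgEquiv_apply, subst_X (.of_constantCoeff_zero' hφ)]⟩

theorem eq_expand_of_forall_coeff_ne_zero_dvd {q : ℕ} (hq : q ≠ 0) {f : R⟦X⟧}
    (hf : ∀ n, coeff n f ≠ 0 → q ∣ n) : f = expand q hq (mk fun j => coeff (q * j) f) := by
  ext n
  rw [coeff_expand]
  split_ifs with h
  · rw [coeff_mk, Nat.mul_div_cancel' h]
  · exact not_not.1 (mt (hf n) h)

theorem exists_pow_eq_of_forall_coeff_ne_zero_dvd (p : ℕ) [ExpChar R p] [PerfectRing R p] (e : ℕ)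
    {f : R⟦X⟧} (hf : ∀ n, coeff n f ≠ 0 → p ^ e ∣ n) : ∃ F : R⟦X⟧, F ^ p ^ e = f := by
  have hp : p ≠ 0 := expChar_ne_zero R p
  set g : R⟦X⟧ := mk fun j => coeff (p ^ e * j) f
  set ρ : R →+* R := (iterateFrobeniusEquiv R p e).symm.toRingHom
  have hρ : map (iterateFrobenius R p e) (map ρ g) = g := by
    ext n
    exact (iterateFrobeniusEquiv R p e).apply_symm_apply _
  refine ⟨map ρ g, ?_⟩
  rw [← MvPowerSeries.map_iterateFrobenius_expand p hp]
  change map _ (expand (p ^ e) _ _) = _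
  rw [map_expand, hρ, ← eq_expand_of_forall_coeff_ne_zero_dvd _ hf]

end CommRing

theorem order_eq_of_order_pow_eq {R : Type*} [Semiring R] [NoZeroDivisors R] [Nontrivial R]
    {F : R⟦X⟧} {q k : ℕ} (hq : q ≠ 0) (h : (F ^ q).order = (q * k : ℕ)) : F.order = k := by
  rw [order_pow, nsmul_eq_mul] at h
  induction hF : F.order using ENat.recTopCoe with
  | top =>
    rw [hF, ENat.mul_top (by exact_mod_cast hq)] at h
    exact absurd h.symm (ENat.natCast_ne_top _)
  | coe j =>
    rw [hF] at h
    have hqj : q * j = q * k := by exact_mod_cast h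
    rw [Nat.eq_of_mul_eq_mul_left (Nat.pos_of_ne_zero hq) hqj]

section Field

variable {K : Type*} [Field K]

theorem exists_pow_eq_of_constantCoeff_eq_pow {n : ℕ} (hn : (n : K) ≠ 0)
    {U : K⟦X⟧} {c : K} (hc : c ≠ 0) (hcU : c ^ n = constantCoeff U) :
    ∃ V : K⟦X⟧, V ^ n = U := by
  have hn0 : n ≠ 0 := by rintro rfl; exact hn Nat.cast_zero
  have hroot : (C c ^ n - U : K⟦X⟧) ∈ Ideal.span {X} := by
    simp [Ideal.mem_span_singleton, X_dvd_iff, hcU]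
  have hderiv : IsUnit ((n : K⟦X⟧) * C c ^ (n - 1)) := by
    simp [isUnit_iff_constantCoeff, hn, hc]
  -- `K⟦X⟧` is `(X)`-adically complete, hence Henselian at `(X)`.
  obtain ⟨V, hV, -⟩ := HenselianRing.is_henselian (I := Ideal.span {(X : K⟦X⟧)})
    (Polynomial.X ^ n - Polynomial.C U) (Polynomial.monic_X_pow_sub_C U hn0) (C c)
    (by simpa using hroot)
    (by simpa [Polynomial.derivative_X_pow] using hderiv.map (Ideal.Quotient.mk (Ideal.span {X})))
  exact ⟨V, by simpa [sub_eq_zero] using hV⟩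

theorem exists_pow_eq_of_order_eq [IsAlgClosed K] {n : ℕ} (hn : (n : K) ≠ 0)
    {F : K⟦X⟧} (hF : F.order = n) :
    ∃ φ : K⟦X⟧, constantCoeff φ = 0 ∧ coeff 1 φ ≠ 0 ∧ φ ^ n = F := by
  have hn0 : n ≠ 0 := by rintro rfl; exact hn Nat.cast_zero
  obtain ⟨hFn, hFlt⟩ := order_eq_nat.1 hF
  obtain ⟨U, hU⟩ := X_pow_dvd_iff.2 hFlt
  have hU0 : constantCoeff U = coeff n F := by simp [hU, coeff_X_pow_mul']
  obtain ⟨c, hc⟩ := IsAlgClosed.exists_pow_nat_eq (coeff n F) (Nat.pos_of_ne_zero hn0)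
  have hc0 : c ≠ 0 := by rintro rfl; exact hFn (by rw [← hc, zero_pow hn0])
  obtain ⟨V, hV⟩ := exists_pow_eq_of_constantCoeff_eq_pow hn hc0 (hc.trans hU0.symm)
  refine ⟨X * V, by simp, ?_, by rw [mul_pow, hV, hU]⟩
  rw [← zero_add 1, coeff_succ_X_mul, coeff_zero_eq_constantCoeff_apply]
  refine ne_zero_pow hn0 ?_
  rwa [← map_pow, hV, hU0]

end Field

end PowerSeries

open PowerSeries

theorem stmt_8 (K : Type*) [Field K] [IsAlgClosed K] (p : ℕ) (hp : p.Prime) [CharP K p]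
    (f : PowerSeries K) (hf0 : constantCoeff f = 0) (m : ℕ)
    (hm : coeff m f ≠ 0) (hmin : ∀ i < m, coeff i f = 0)
    (he : padicValNat p m = sInf (padicValNat p '' {n | coeff n f ≠ 0})) :
    ∃ Φ : PowerSeries K ≃ₐ[K] PowerSeries K, Φ f = X ^ m := by
  have := Fact.mk hp
  have hsupp : ∀ n, coeff n f ≠ 0 → p ^ padicValNat p m ∣ n := fun n hn =>
    (padicValNat_dvd_iff_le (by rintro rfl; simp [hf0] at hn)).2
      (he ▸ csInf_le (OrderBot.bddBelow _) ⟨n, hn, rfl⟩)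
  obtain ⟨F, hF⟩ := exists_pow_eq_of_forall_coeff_ne_zero_dvd p _ hsupp
  obtain ⟨k, hk⟩ := hsupp m hm
  have hm0 : m ≠ 0 := by rintro rfl; simp [hf0] at hm
  have hpk : ¬ p ∣ k := fun ⟨j, hj⟩ =>
    pow_succ_padicValNat_not_dvd (p := p) hm0 ⟨j, by rw [pow_succ, mul_assoc, ← hj, ← hk]⟩
  have hFord : F.order = k := order_eq_of_order_pow_eq (pow_ne_zero _ hp.ne_zero)
    (by rw [hF, ← hk, order_eq_nat.2 ⟨hm, hmin⟩])
  obtain ⟨φ, hφ0, hφ1, hφ⟩ :=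
    exists_pow_eq_of_order_eq (by rwa [Ne, CharP.cast_eq_zero_iff K p]) hFord
  obtain ⟨Φ, hΦ⟩ := exists_algEquiv_apply_eq_X hφ0 hφ1.isUnit
  exact ⟨Φ, by rw [← hF, ← hφ, ← pow_mul, map_pow, hΦ, mul_comm, ← hk]⟩
end

section
/- Let K be an algebraically closed field of characteristic p > 0. Fix q > p with p ∤ q, k := ⌈(q − p)/(p − 1)⌉, d := q + k − 1, and Λ := {n : q ≤ n ≤ d, p ∤ n}. For λ = (λ_n)_{n∈Λ} ∈ K^Λ with λ_q ≠ 0, set f_λ := x^p + Σ_{n∈Λ} λ_n x^n. If f_λ is right equivalent to f_{λ'} (with λ_q, λ'_q ≠ 0), then λ = λ'. That is, the normal forms with distinct parameters are pairwise right inequivalent. -/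
open PowerSeries

noncomputable def milnor (K : Type*) [Field K] (f : PowerSeries K) : ℕ :=
  Module.finrank K (PowerSeries K ⧸ Ideal.span {f.derivativeFun})

def MilnorFinite (K : Type*) [Field K] (f : PowerSeries K) : Prop :=
  Module.Finite K (PowerSeries K ⧸ Ideal.span {f.derivativeFun})

def RightEquiv (K : Type*) [Field K] (f g : PowerSeries K) : Prop :=
  ∃ Φ : PowerSeries K ≃ₐ[K] PowerSeries K, Φ f = g

/-!
Put `u = Φ X`, so that `f_λ(u) = f_λ'(X)`. Two facts drive the comparison of coefficients:
in characteristic `p` the coefficient of `X ^ (p * m)` in `u ^ p` is `u_m ^ p` and `u ^ p` has no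
monomials of degree prime to `p`; and if `u ≡ X mod X ^ m` then `u ^ n ≡ X ^ n mod X ^ (n - 1 + m)`.
If `u ≡ X mod X ^ m` with `(p - 1) * m + 1 < q`, comparing the coefficients of `X ^ (p * m)` thus
gives `u_m ^ p = X_m ^ p`, hence `u_m = X_m`; by induction `u ≡ X mod X ^ (k + 1)`, the definition
of `k` being exactly `(p - 1) * k ≤ q - 2`. Then for `n ∈ Λ` we have `n ≤ q + k - 1`, so comparing
the coefficients of `X ^ n` gives `λ_n = λ'_n`.
-/

theorem pow_sub_one_mul_sub_dvd_pow_sub_pow {R : Type*} [CommRing R] {t x y : R}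
    (hx : t ∣ x) (hy : t ∣ y) (n : ℕ) : t ^ (n - 1) * (x - y) ∣ x ^ n - y ^ n := by
  rw [← geom_sum₂_mul]
  refine mul_dvd_mul (Finset.dvd_sum fun i hi => ?_) dvd_rfl
  have hin : t ^ (n - 1) = t ^ i * t ^ (n - 1 - i) := by
    rw [← pow_add, Nat.add_sub_of_le (Nat.le_sub_one_of_lt (Finset.mem_range.1 hi))]
  rw [hin]
  exact mul_dvd_mul (pow_dvd_pow_of_dvd hx i) (pow_dvd_pow_of_dvd hy _)

namespace PowerSeries

section CommRing

variable {R : Type*} [CommRing R]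

theorem X_pow_dvd_pow_sub_X_pow {u : R⟦X⟧} {m : ℕ} (hm : 1 ≤ m) (hu : X ^ m ∣ u - X) (n : ℕ) :
    X ^ (n - 1 + m) ∣ u ^ n - X ^ n := by
  have hXu : X ∣ u := by
    simpa using dvd_add ((dvd_pow_self X (by omega)).trans hu) (dvd_refl X)
  rw [pow_add]
  exact mul_dvd_mul dvd_rfl hu |>.trans (pow_sub_one_mul_sub_dvd_pow_sub_pow hXu dvd_rfl n)

theorem coeff_pow_eq_coeff_X_pow {u : R⟦X⟧} {m N n : ℕ} (hm : 1 ≤ m) (hu : X ^ m ∣ u - X)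
    (hN : N < n - 1 + m) : coeff N (u ^ n) = coeff N (X ^ n : R⟦X⟧) := by
  rw [← sub_eq_zero, ← map_sub]
  exact X_pow_dvd_iff.1 (X_pow_dvd_pow_sub_X_pow hm hu n) N hN

noncomputable def powSum (Λ : Finset ℕ) (c : ℕ → R) (v : R⟦X⟧) : R⟦X⟧ :=
  ∑ n ∈ Λ, C (c n) * v ^ n

theorem map_powSum {F : Type*} [FunLike F R⟦X⟧ R⟦X⟧] [AlgHomClass F R R⟦X⟧ R⟦X⟧] (Φ : F)
    (Λ : Finset ℕ) (c : ℕ → R) (v : R⟦X⟧) :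
    Φ (powSum Λ c v) = powSum Λ c (Φ v) := by
  simp only [powSum, map_sum, map_mul, map_pow, ← algebraMap_eq, AlgHomClass.commutes]

theorem coeff_powSum_X (Λ : Finset ℕ) (c : ℕ → R) (N : ℕ) :
    coeff N (powSum Λ c X) = if N ∈ Λ then c N else 0 := by
  simp [powSum, map_sum, coeff_C_mul, coeff_X_pow]

theorem coeff_powSum_eq_coeff_powSum_X {Λ : Finset ℕ} (c : ℕ → R) {u : R⟦X⟧} {m N : ℕ}
    (hm : 1 ≤ m) (hu : X ^ m ∣ u - X) (hN : ∀ n ∈ Λ, N < n - 1 + m) :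
    coeff N (powSum Λ c u) = coeff N (powSum Λ c X) := by
  simp only [powSum, map_sum, coeff_C_mul]
  exact Finset.sum_congr rfl fun n hn => by rw [coeff_pow_eq_coeff_X_pow hm hu (hN n hn)]

section ExpChar

variable (p : ℕ) [ExpChar R p]

theorem map_frobenius_expand (u : R⟦X⟧) :
    map (frobenius R p) (expand p (expChar_ne_zero R p) u) = u ^ p :=
  MvPowerSeries.map_frobenius_expand p _

theorem coeff_mul_pow_char (u : R⟦X⟧) (m : ℕ) : coeff (p * m) (u ^ p) = coeff m u ^ p := by
  rw [← map_frobenius_expand, coeff_map, coeff_expand_mul, frobenius_def]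

theorem coeff_pow_char_of_not_dvd (u : R⟦X⟧) {n : ℕ} (hn : ¬ p ∣ n) : coeff n (u ^ p) = 0 := by
  rw [← map_frobenius_expand, coeff_map, coeff_expand_of_not_dvd _ _ _ hn, map_zero]

end ExpChar

section NormalForm

variable {p : ℕ} [ExpChar R p] {Λ : Finset ℕ} {lam lam' : ℕ → R} {u : R⟦X⟧}

theorem coeff_eq_coeff_X_of_pow_char_add_powSum_eq [IsReduced R] (hΛ : ∀ n ∈ Λ, ¬ p ∣ n)
    (H : u ^ p + powSum Λ lam u = X ^ p + powSum Λ lam' X) {m : ℕ} (hm : 1 ≤ m)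
    (hu : X ^ m ∣ u - X) (hmΛ : ∀ n ∈ Λ, (p - 1) * m + 1 < n) : coeff m u = coeff m X := by
  have hp : m ≤ p * m := Nat.le_mul_of_pos_left m (Nat.pos_of_ne_zero (expChar_ne_zero R p))
  have hpm : ∀ n ∈ Λ, p * m < n - 1 + m := fun n hn => by
    have := hmΛ n hn
    rw [Nat.sub_one_mul] at this
    omega
  have hpmΛ : p * m ∉ Λ := fun h => hΛ _ h (dvd_mul_right p m)
  have H' := congrArg (coeff (p * m)) H
  rw [map_add, map_add, coeff_mul_pow_char, coeff_mul_pow_char,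
    coeff_powSum_eq_coeff_powSum_X _ hm hu hpm, coeff_powSum_X, coeff_powSum_X, if_neg hpmΛ,
    if_neg hpmΛ, add_zero, add_zero] at H'
  exact frobenius_inj R p H'

theorem X_pow_dvd_sub_X_of_pow_char_add_powSum_eq [IsReduced R] (hΛ : ∀ n ∈ Λ, ¬ p ∣ n)
    (H : u ^ p + powSum Λ lam u = X ^ p + powSum Λ lam' X) (hX : X ∣ u) {k : ℕ}
    (hk : ∀ n ∈ Λ, (p - 1) * k + 1 < n) : X ^ (k + 1) ∣ u - X := by
  suffices ∀ m, 1 ≤ m → m ≤ k + 1 → X ^ m ∣ u - X from this (k + 1) (by omega) le_rfl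
  intro m hm
  induction m, hm using Nat.le_induction with
  | base => exact fun _ => by simpa using dvd_sub hX dvd_rfl
  | succ m hm ih =>
    intro hmk
    have hu := ih (by omega)
    rw [X_pow_dvd_iff]
    intro j hj
    rcases Nat.lt_succ_iff_lt_or_eq.1 hj with hj | rfl
    · exact X_pow_dvd_iff.1 hu j hj
    · rw [map_sub, sub_eq_zero]
      refine coeff_eq_coeff_X_of_pow_char_add_powSum_eq hΛ H hm hu fun n hn => ?_
      have := Nat.mul_le_mul_left (p - 1) (show j ≤ k by omega)
      have := hk n hn
      omega

theorem eq_of_pow_char_add_powSum_eq (hΛ : ∀ n ∈ Λ, ¬ p ∣ n)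
    (H : u ^ p + powSum Λ lam u = X ^ p + powSum Λ lam' X) {m : ℕ} (hm : 1 ≤ m)
    (hu : X ^ m ∣ u - X) {N : ℕ} (hN : N ∈ Λ) (hNΛ : ∀ n ∈ Λ, N < n - 1 + m) :
    lam N = lam' N := by
  have H' := congrArg (coeff N) H
  rwa [map_add, map_add, coeff_pow_char_of_not_dvd p _ (hΛ N hN),
    coeff_pow_char_of_not_dvd p _ (hΛ N hN), coeff_powSum_eq_coeff_powSum_X _ hm hu hNΛ,
    coeff_powSum_X, coeff_powSum_X, if_pos hN, if_pos hN, zero_add, zero_add] at H'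

end NormalForm

end CommRing

theorem X_dvd_algEquiv_X {K : Type*} [Field K] (Φ : K⟦X⟧ ≃ₐ[K] K⟦X⟧) : X ∣ Φ X := by
  rw [X_dvd_iff]
  by_contra h
  have hX : IsUnit (X : K⟦X⟧) := by
    simpa using (isUnit_iff_constantCoeff.2 (isUnit_iff_ne_zero.2 h)).map Φ.symm
  simp [isUnit_iff_constantCoeff] at hX

end PowerSeries

theorem stmt_12_general (K : Type*) [Field K] (p : ℕ) (hp : p.Prime) [CharP K p]
    (q k d : ℕ) (hq : p < q)
    (hk : k = (q - p + (p - 1) - 1) / (p - 1)) (hd : d = q + k - 1)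
    (lam lam' : ℕ → K)
    (h : RightEquiv K
      (X ^ p + ∑ n ∈ (Finset.Icc q d).filter (fun n => ¬ p ∣ n), C (lam n) * X ^ n)
      (X ^ p + ∑ n ∈ (Finset.Icc q d).filter (fun n => ¬ p ∣ n), C (lam' n) * X ^ n)) :
    ∀ n ∈ (Finset.Icc q d).filter (fun n => ¬ p ∣ n), lam n = lam' n := by
  have : Fact p.Prime := ⟨hp⟩
  set Λ := (Finset.Icc q d).filter (fun n => ¬ p ∣ n)
  have hΛ : ∀ n ∈ Λ, q ≤ n ∧ n ≤ d := fun n hn => Finset.mem_Icc.1 (Finset.mem_filter.1 hn).1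
  have hpΛ : ∀ n ∈ Λ, ¬ p ∣ n := fun n hn => (Finset.mem_filter.1 hn).2
  obtain ⟨Φ, hΦ⟩ := h
  have H : Φ X ^ p + powSum Λ lam (Φ X) = X ^ p + powSum Λ lam' X := by
    rw [← map_pow, ← map_powSum, ← map_add]
    exact hΦ
  have hkq : (p - 1) * k + 1 < q := by
    have hkle : (p - 1) * k ≤ q - p + (p - 1) - 1 := hk ▸ Nat.mul_div_le _ _
    have := hp.two_le
    omega
  have hdvd : X ^ (k + 1) ∣ Φ X - X :=
    X_pow_dvd_sub_X_of_pow_char_add_powSum_eq hpΛ H (X_dvd_algEquiv_X Φ)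
      fun n hn => hkq.trans_le (hΛ n hn).1
  intro n hn
  exact eq_of_pow_char_add_powSum_eq hpΛ H (by omega) hdvd hn
    fun j hj => by have := hΛ j hj; have := hΛ n hn; omega

theorem stmt_12 (K : Type*) [Field K] [IsAlgClosed K] (p : ℕ) (hp : p.Prime) [CharP K p]
    (q k d : ℕ) (hq : p < q) (hpq : ¬ p ∣ q)
    (hk : k = (q - p + (p - 1) - 1) / (p - 1)) (hd : d = q + k - 1)
    (lam lam' : ℕ → K) (hlq : lam q ≠ 0) (hlq' : lam' q ≠ 0)
    (h : RightEquiv K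
      (X ^ p + ∑ n ∈ (Finset.Icc q d).filter (fun n => ¬ p ∣ n), C (lam n) * X ^ n)
      (X ^ p + ∑ n ∈ (Finset.Icc q d).filter (fun n => ¬ p ∣ n), C (lam' n) * X ^ n)) :
    ∀ n ∈ (Finset.Icc q d).filter (fun n => ¬ p ∣ n), lam n = lam' n :=
  stmt_12_general K p hp q k d hq hk hd lam lam' h
end

section
/- Let K be an algebraically closed field of characteristic p > 0, f ∈ K[[x]] with f(0) = 0 and finite Milnor number μ. Consider the semiuniversal unfolding with trivial section f_t(x) = f(x) + Σ_{i=1}^{μ} t_i x^i over 𝔸^μ. Then the μ-constant stratum Σ_μ := {t ∈ 𝔸^μ : μ(f_t) = μ} equals {t : t_i = 0 for all i with p ∤ i}, and hence dim Σ_μ = ⌊μ/p⌋. -/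
open PowerSeries

/-!
The Milnor number of `g` is the `X`-adic order of `g'`, since `K⟦X⟧` is a discrete valuation
ring with uniformizer `X`. The derivative of the unfolding is `f' + ∑ tᵢ i Xⁱ⁻¹`; in
characteristic `p` the terms with `p ∣ i` vanish, and the rest form a polynomial of degree
`< μ = ord f'`, which lowers the order unless it is zero.
-/

namespace PowerSeries

section Semiring

variable {R : Type*} [Semiring R]

theorem toNat_order_add_eq_iff {g h : R⟦X⟧} {n : ℕ}
    (hg : g.order = n) (hh : ∀ m, n ≤ m → coeff m h = 0) :
    (g + h).order.toNat = n ↔ h = 0 := by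
  refine ⟨fun hgh => ?_, fun h0 => by simp [h0, hg]⟩
  by_contra h0
  obtain ⟨m, hm⟩ : ∃ m, coeff m h ≠ 0 := by
    by_contra! hcoeff
    exact h0 (ext hcoeff)
  have hlt : h.order < n :=
    (order_le m hm).trans_lt (Nat.cast_lt.mpr (not_le.mp fun hnm => hm (hh m hnm)))
  rw [add_comm, order_add_of_order_ne _ _ (hg ▸ hlt.ne), inf_eq_left.mpr (hg ▸ hlt.le)] at hgh
  rw [← hgh, ENat.natCast_toNat hlt.ne_top] at hlt
  exact hlt.false

theorem coeff_sum_C_mul_X_pow {n : ℕ} (c : Fin n → R) (m : ℕ) :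
    coeff m (∑ i, C (c i) * X ^ (i : ℕ)) = if h : m < n then c ⟨m, h⟩ else 0 := by
  simp only [map_sum, coeff_C_mul_X_pow]
  split_ifs with h
  · rw [Finset.sum_eq_single ⟨m, h⟩ (fun i _ hi => if_neg fun him => hi (Fin.ext him.symm))
      (by simp)]
    simp
  · exact Finset.sum_eq_zero fun i _ => if_neg fun him : m = i => h (him ▸ i.2)

theorem sum_C_mul_X_pow_eq_zero_iff {n : ℕ} (c : Fin n → R) :
    ∑ i, C (c i) * X ^ (i : ℕ) = 0 ↔ ∀ i, c i = 0 := by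
  refine ⟨fun h i => ?_, fun h => by simp [h]⟩
  have := congr_arg (coeff i) h
  rwa [coeff_sum_C_mul_X_pow, dif_pos i.2, map_zero] at this

theorem coeffs_surjective (n : ℕ) :
    Function.Surjective (LinearMap.pi fun k : Fin n => coeff (R := R) k) := fun c =>
  ⟨∑ i, C (c i) * X ^ (i : ℕ), funext fun k => by
    rw [LinearMap.pi_apply, coeff_sum_C_mul_X_pow, dif_pos k.2]⟩

end Semiring

theorem derivative_sum_C_mul_X_pow_add_one {R : Type*} [CommSemiring R] {n : ℕ}
    (c : Fin n → R) :
    d⁄dX R (∑ i, C (c i) * X ^ ((i : ℕ) + 1))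
      = ∑ i, C (c i * ((i : ℕ) + 1)) * X ^ (i : ℕ) := by
  refine (map_sum _ _ _).trans (Finset.sum_congr rfl fun i _ => ?_)
  rw [Derivation.leibniz, derivative_C, smul_zero, add_zero, derivative_pow, derivative_X,
    smul_eq_mul, map_mul, map_add, map_natCast, map_one]
  push_cast
  ring

section Field

variable {K : Type*} [Field K]

theorem finrank_quotient_span_X_pow (n : ℕ) :
    Module.finrank K (K⟦X⟧ ⧸ Ideal.span {(X : K⟦X⟧) ^ n}) = n := by
  have hker : LinearMap.ker (LinearMap.pi fun k : Fin n => coeff (R := K) k)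
      = (Ideal.span {(X : K⟦X⟧) ^ n}).restrictScalars K := by
    ext f
    simp [Ideal.mem_span_singleton, X_pow_dvd_iff, funext_iff, Fin.forall_iff]
  have e := LinearMap.quotKerEquivOfSurjective _ (coeffs_surjective (R := K) n)
  rw [hker] at e
  rw [(Submodule.Quotient.restrictScalarsEquiv K _).symm.finrank_eq, e.finrank_eq,
    Module.finrank_fin_fun]

theorem not_finite : ¬ Module.Finite K K⟦X⟧ := fun _ =>
  Polynomial.not_finite <| Module.Finite.of_injective
    (Polynomial.coeToPowerSeries.algHom (R := K) K).toLinearMap fun _ _ h => by simpa using h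

theorem not_finite_quotient_span_zero :
    ¬ Module.Finite K (K⟦X⟧ ⧸ Ideal.span {(0 : K⟦X⟧)}) := by
  rw [Ideal.span_singleton_eq_bot.mpr rfl]
  exact fun _ => not_finite (Module.Finite.equiv (AlgEquiv.quotientBot K K⟦X⟧).toLinearEquiv)

theorem finrank_quotient_span_eq_order_toNat (g : K⟦X⟧) :
    Module.finrank K (K⟦X⟧ ⧸ Ideal.span {g}) = g.order.toNat := by
  rcases eq_or_ne g 0 with rfl | hg
  · rw [order_zero, ENat.toNat_top, Module.finrank_of_not_finite not_finite_quotient_span_zero]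
  · have : Ideal.span {g} = Ideal.span {(X : K⟦X⟧) ^ g.order.toNat} := by
      rw [Ideal.span_singleton_eq_span_singleton]
      have := associated_mul_unit_left (X ^ g.order.toNat) _ (isUnit_divided_by_X_pow_order hg)
      rwa [X_pow_order_mul_divXPowOrder] at this
    rw [this, finrank_quotient_span_X_pow]

end Field

end PowerSeries

section Milnor

variable {K : Type*} [Field K]

set_option linter.deprecated false in
theorem milnor_eq_toNat_order_derivative (f : K⟦X⟧) : milnor K f = (d⁄dX K f).order.toNat :=
  finrank_quotient_span_eq_order_toNat _

set_option linter.deprecated false in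
theorem MilnorFinite.derivative_ne_zero {f : K⟦X⟧} (hf : MilnorFinite K f) :
    d⁄dX K f ≠ 0 := by
  intro h0
  rw [MilnorFinite, show f.derivativeFun = 0 from h0] at hf
  exact not_finite_quotient_span_zero hf

theorem MilnorFinite.order_derivative {f : K⟦X⟧} (hf : MilnorFinite K f) :
    (d⁄dX K f).order = milnor K f := by
  rw [milnor_eq_toNat_order_derivative,
    ENat.natCast_toNat (order_eq_top.not.mpr hf.derivative_ne_zero)]

end Milnor

namespace Submodule

variable {R ι : Type*} [Semiring R] {φ : ι → Type*} [∀ i, AddCommMonoid (φ i)]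
  [∀ i, Module R (φ i)]

def piBotEquiv (S : Set ι) [DecidablePred (· ∈ S)] :
    pi S (fun i => (⊥ : Submodule R (φ i))) ≃ₗ[R] ((i : {i // i ∉ S}) → φ i) where
  toFun x i := x.1 i
  map_add' _ _ := rfl
  map_smul' _ _ := rfl
  invFun y := ⟨fun i => if h : i ∈ S then 0 else y ⟨i, h⟩, fun i hi => by simp [hi]⟩
  left_inv x := by
    ext i
    by_cases h : i ∈ S
    · simpa [h] using (x.2 i h).symm
    · simp [h]
  right_inv y := by
    ext i
    simp [i.2]

theorem finrank_pi_bot {K : Type*} [Field K] [Fintype ι] (S : Set ι) :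
    Module.finrank K (pi S fun _ => (⊥ : Submodule K K)) = Nat.card {i // i ∉ S} := by
  classical
  rw [(piBotEquiv S).finrank_eq, Module.finrank_fintype_fun_eq_card, Nat.card_eq_fintype_card]

end Submodule

theorem Nat.card_fin_dvd_add_one (n p : ℕ) :
    Nat.card {i : Fin n // p ∣ (i : ℕ) + 1} = n / p := by
  rw [Nat.card_eq_fintype_card, Fintype.card_subtype, Finset.card_filter,
    Fin.sum_univ_eq_sum_range (fun i => if p ∣ i + 1 then 1 else 0), ← Finset.card_filter,
    Nat.card_multiples]

theorem stmt_17_general (K : Type*) [Field K] (p : ℕ) [CharP K p]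
    (f : PowerSeries K) (hfin : MilnorFinite K f)
    (μ : ℕ) (hμ : μ = milnor K f) :
    {t : Fin μ → K | milnor K (f + ∑ i, C (t i) * X ^ ((i : ℕ) + 1)) = μ}
        = ↑(Submodule.pi {i : Fin μ | ¬ p ∣ ((i : ℕ) + 1)} fun _ => (⊥ : Submodule K K)) ∧
      Module.finrank K
        (Submodule.pi {i : Fin μ | ¬ p ∣ ((i : ℕ) + 1)} fun _ => (⊥ : Submodule K K))
        = μ / p := by
  have hord : (d⁄dX K f).order = μ := hμ ▸ hfin.order_derivative
  refine ⟨Set.ext fun t => ?_, ?_⟩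
  · simp only [Set.mem_ofPred_eq, SetLike.mem_coe, Submodule.mem_pi, Submodule.mem_bot]
    have hdeg :
        ∀ m, μ ≤ m → coeff m (∑ i, C (t i * ((i : ℕ) + 1)) * X ^ (i : ℕ)) = 0 :=
      fun m hm => by rw [coeff_sum_C_mul_X_pow, dif_neg (Nat.not_lt.mpr hm)]
    rw [milnor_eq_toNat_order_derivative, map_add, derivative_sum_C_mul_X_pow_add_one,
      toNat_order_add_eq_iff hord hdeg, sum_C_mul_X_pow_eq_zero_iff]
    refine forall_congr' fun i => ?_
    rw [mul_eq_zero, ← Nat.cast_succ, CharP.cast_eq_zero_iff K p]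
    tauto
  · rw [Submodule.finrank_pi_bot, ← Nat.card_fin_dvd_add_one μ p]
    simp only [Set.mem_ofPred_eq, not_not]

theorem stmt_17 (K : Type*) [Field K] [IsAlgClosed K] (p : ℕ) (hp : p.Prime) [CharP K p]
    (f : PowerSeries K) (hf0 : constantCoeff f = 0) (hfin : MilnorFinite K f)
    (μ : ℕ) (hμ : μ = milnor K f) :
    {t : Fin μ → K | milnor K (f + ∑ i, C (t i) * X ^ ((i : ℕ) + 1)) = μ}
        = ↑(Submodule.pi {i : Fin μ | ¬ p ∣ ((i : ℕ) + 1)} fun _ => (⊥ : Submodule K K)) ∧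
      Module.finrank K
        (Submodule.pi {i : Fin μ | ¬ p ∣ ((i : ℕ) + 1)} fun _ => (⊥ : Submodule K K))
        = μ / p :=
  stmt_17_general K p f hfin μ hμ
end
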